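/- Suppose p : ℂⁿ → ℂᴺ is a polynomial map that restricts to a proper holomorphic map of the unit ball 𝔹ₙ to the unit ball 𝔹ᴺ and satisfies p(0) = 0. Then ‖p(z)‖ → ∞ as ‖z‖ → ∞. -/

import Mathlib

open MvPolynomial Metric

noncomputable def evalPoly {n N : ℕ} (P : Fin N → MvPolynomial (Fin n) ℂ)
    (z : EuclideanSpace ℂ (Fin n)) : EuclideanSpace ℂ (Fin N) :=
  WithLp.toLp 2 fun i => MvPolynomial.eval (fun j => z j) (P i)

/-- `f` is a proper map of `S` to `T`: it maps `S` into `T`, and preimages in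
`S` of compact subsets of `T` are compact. -/
def ProperOn {α β : Type*} [TopologicalSpace α] [TopologicalSpace β]
    (f : α → β) (S : Set α) (T : Set β) : Prop :=
  Set.MapsTo f S T ∧ ∀ K : Set β, K ⊆ T → IsCompact K → IsCompact (S ∩ f ⁻¹' K)

lemma continuous_evalPoly {n N : ℕ} (P : Fin N → MvPolynomial (Fin n) ℂ) :
    Continuous (evalPoly P) := by
  have h : ∀ i, Continuous fun z : EuclideanSpace ℂ (Fin n) =>
      MvPolynomial.eval (fun j => z j) (P i) := fun i =>
    (P i).continuous_eval.comp (continuous_pi fun j =>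
      (continuous_apply j).comp (PiLp.continuous_ofLp 2 fun _ : Fin n => ℂ))
  exact (PiLp.continuous_toLp 2 fun _ : Fin N => ℂ).comp (continuous_pi h)

lemma infinite_sphere_complex (r : ℝ) (hr : 0 < r) : (Metric.sphere (0:ℂ) r).Infinite := by
  have h := (isConnected_sphere (E := ℂ) (by rw [Complex.rank_real_complex]; norm_num) 0 hr.le)
  apply h.isPreconnected.infinite_of_nontrivial
  refine ⟨r, ?_, -r, ?_, ?_⟩
  · simp [abs_of_pos hr]
  · simp [abs_of_pos hr]
  · intro h
    have h2 : (r:ℂ) = 0 := by linear_combination h/2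
    rw [Complex.ofReal_eq_zero] at h2; linarith

/-- A proper polynomial map of balls has unimodular boundary values. -/
lemma norm_evalPoly_sphere {n N : ℕ} (P : Fin N → MvPolynomial (Fin n) ℂ)
    (hproper : ProperOn (evalPoly P) (ball (0 : EuclideanSpace ℂ (Fin n)) 1)
      (ball (0 : EuclideanSpace ℂ (Fin N)) 1))
    (w : EuclideanSpace ℂ (Fin n)) (hw : ‖w‖ = 1) : ‖evalPoly P w‖ = 1 := by
  have hcont := continuous_evalPoly P
  have Tt : Filter.Tendsto (fun s : ℝ => s • w) (nhdsWithin 1 (Set.Iio 1)) (nhds w) := by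
    have hc : Continuous fun s : ℝ => s • w := continuous_id.smul continuous_const
    have := (hc.tendsto 1).mono_left (nhdsWithin_le_nhds (s := Set.Iio 1))
    simpa using this
  have Tp : Filter.Tendsto (fun s : ℝ => evalPoly P (s • w)) (nhdsWithin 1 (Set.Iio 1))
      (nhds (evalPoly P w)) := (hcont.tendsto w).comp Tt
  have hpos : ∀ᶠ s : ℝ in nhdsWithin 1 (Set.Iio 1), 0 < s :=
    nhdsWithin_le_nhds (eventually_gt_nhds (by norm_num : (0:ℝ) < 1))
  have hball : ∀ᶠ s : ℝ in nhdsWithin 1 (Set.Iio 1), s • w ∈ ball (0:EuclideanSpace ℂ (Fin n)) 1 := by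
    filter_upwards [hpos, self_mem_nhdsWithin] with s hs hs1
    rw [mem_ball_zero_iff, norm_smul, hw, mul_one]
    rw [Set.mem_Iio] at hs1
    rw [Real.norm_eq_abs, abs_of_pos hs]; exact hs1
  have hle : ‖evalPoly P w‖ ≤ 1 := by
    apply le_of_tendsto Tp.norm
    filter_upwards [hball] with s hs
    exact le_of_lt (mem_ball_zero_iff.1 (hproper.1 hs))
  rcases eq_or_lt_of_le hle with h | h
  · exact h
  · exfalso
    set ρ : ℝ := (1 + ‖evalPoly P w‖) / 2 with hρdef
    have hρ1 : ρ < 1 := by simp only [hρdef]; linarith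
    have hρ2 : ‖evalPoly P w‖ < ρ := by simp only [hρdef]; linarith
    have hKsub : closedBall (0:EuclideanSpace ℂ (Fin N)) ρ ⊆ ball 0 1 :=
      closedBall_subset_ball hρ1
    have hS := hproper.2 _ hKsub (isCompact_closedBall _ _)
    have hmem : ∀ᶠ s : ℝ in nhdsWithin 1 (Set.Iio 1),
        s • w ∈ ball (0:EuclideanSpace ℂ (Fin n)) 1 ∩ evalPoly P ⁻¹' closedBall 0 ρ := by
      have hev : ∀ᶠ s : ℝ in nhdsWithin 1 (Set.Iio 1), ‖evalPoly P (s • w)‖ < ρ :=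
        Tp.norm.eventually_lt_const hρ2
      filter_upwards [hball, hev] with s h1 h2
      exact ⟨h1, by rw [Set.mem_preimage, mem_closedBall_zero_iff]; exact h2.le⟩
    have hwS : w ∈ ball (0:EuclideanSpace ℂ (Fin n)) 1 ∩ evalPoly P ⁻¹' closedBall 0 ρ :=
      hS.isClosed.mem_of_tendsto Tt hmem
    have := mem_ball_zero_iff.1 hwS.1
    rw [hw] at this; exact lt_irrefl _ this

/-- The reflection identity. -/
lemma key_identity {n N : ℕ} (P : Fin N → MvPolynomial (Fin n) ℂ)
    (hsph : ∀ w : EuclideanSpace ℂ (Fin n), ‖w‖ = 1 → ‖evalPoly P w‖ = 1)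
    (z : EuclideanSpace ℂ (Fin n)) (hz : z ≠ 0) :
    (inner ℂ (evalPoly P (((‖z‖^2)⁻¹ : ℝ) • z)) (evalPoly P z) : ℂ) = 1 := by
  classical
  set r : ℝ := ‖z‖ with hrdef
  have hr : 0 < r := norm_pos_iff.2 hz
  set c : ℂ := ((r:ℂ)^2)⁻¹ with hcdef
  have hcr : c = ((r^2)⁻¹ : ℝ) := by push_cast [hcdef]; ring
  -- one-variable polynomials
  set A : Fin N → Polynomial ℂ := fun i =>
    eval₂ Polynomial.C (fun j => Polynomial.C (z j) * Polynomial.X) (P i) with hAdef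
  set B : Fin N → Polynomial ℂ := fun i =>
    eval₂ (Polynomial.C.comp (starRingEnd ℂ))
      (fun j => Polynomial.C (starRingEnd ℂ (z j)) * Polynomial.X) (P i) with hBdef
  have hA : ∀ i t, (A i).eval t = MvPolynomial.eval (fun j => z j * t) (P i) := by
    intro i t
    have h := eval₂_comp_left (Polynomial.evalRingHom t) Polynomial.C
        (fun j => Polynomial.C (z j) * Polynomial.X) (P i)
    simp only [Polynomial.coe_evalRingHom] at h
    rw [hAdef, h, ← eval₂_id]
    congr 1
    · ext x; simp
    · ext j; simp
  have hconj : ∀ i (w : Fin n → ℂ), starRingEnd ℂ (MvPolynomial.eval w (P i))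
      = eval₂ (starRingEnd ℂ) (fun j => starRingEnd ℂ (w j)) (P i) := by
    intro i w
    have h := eval₂_comp_left (starRingEnd ℂ) (RingHom.id ℂ) w (P i)
    rw [eval₂_id] at h
    rw [h]
    rfl
  have hB : ∀ i t, (B i).eval (starRingEnd ℂ t)
      = starRingEnd ℂ (MvPolynomial.eval (fun j => z j * t) (P i)) := by
    intro i t
    have h := eval₂_comp_left (Polynomial.evalRingHom (starRingEnd ℂ t))
        (Polynomial.C.comp (starRingEnd ℂ))
        (fun j => Polynomial.C (starRingEnd ℂ (z j)) * Polynomial.X) (P i)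
    simp only [Polynomial.coe_evalRingHom] at h
    rw [hBdef, h, hconj]
    congr 1
    · ext x; simp
    · ext j; simp
  set D : ℕ := Finset.univ.sup fun i => (B i).natDegree with hDdef
  have hD : ∀ i, (B i).natDegree < D + 1 := fun i =>
    Nat.lt_succ_of_le (Finset.le_sup (f := fun i => (B i).natDegree) (Finset.mem_univ i))
  set R : Fin N → Polynomial ℂ := fun i =>
    ∑ k ∈ Finset.range (D+1), Polynomial.C ((B i).coeff k * c^k) * Polynomial.X^(D-k) with hRdef
  have hR : ∀ i (t : ℂ), t ≠ 0 → (R i).eval t = t^D * (B i).eval (c * t⁻¹) := by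
    intro i t ht
    rw [hRdef]
    simp only [Polynomial.eval_finset_sum, Polynomial.eval_mul, Polynomial.eval_C,
      Polynomial.eval_pow, Polynomial.eval_X]
    rw [Polynomial.eval_eq_sum_range' (hD i), Finset.mul_sum]
    apply Finset.sum_congr rfl
    intro k hk
    rw [Finset.mem_range] at hk
    have hk' : k ≤ D := Nat.lt_succ_iff.1 hk
    have htk : t^(D-k) * t^k = t^D := by rw [← pow_add, Nat.sub_add_cancel hk']
    have h2 : t ^ D * t⁻¹ ^ k = t ^ (D - k) := by
      rw [← htk, inv_pow, mul_assoc, mul_inv_cancel₀ (pow_ne_zero _ ht), mul_one]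
    calc (B i).coeff k * c ^ k * t ^ (D - k)
        = (B i).coeff k * c ^ k * (t ^ D * t⁻¹ ^ k) := by rw [h2]
      _ = t ^ D * ((B i).coeff k * (c * t⁻¹) ^ k) := by rw [mul_pow]; ring
  set Q : Polynomial ℂ := (∑ i, A i * R i) - Polynomial.X^D with hQdef
  have hQ0 : ∀ t ∈ Metric.sphere (0:ℂ) r⁻¹, Q.eval t = 0 := by
    intro t ht
    have habs : ‖t‖ = r⁻¹ := by rwa [mem_sphere_zero_iff_norm] at ht
    have ht0 : t ≠ 0 := by
      intro h; rw [h, norm_zero] at habs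
      exact absurd habs.symm (ne_of_gt (inv_pos.2 hr))
    have hct : c * t⁻¹ = starRingEnd ℂ t := by
      have h1 : t * starRingEnd ℂ t = ((r⁻¹)^2 : ℝ) := by
        rw [Complex.mul_conj]
        norm_cast
        rw [Complex.normSq_eq_norm_sq, habs]
      have h2 : t * starRingEnd ℂ t = c := by
        rw [h1, hcdef]; push_cast; rw [inv_pow]
      rw [← h2, mul_comm t, mul_assoc, mul_inv_cancel₀ ht0, mul_one]
    -- the point t • z on the unit sphere
    set w : EuclideanSpace ℂ (Fin n) := t • z with hwdef
    have hwz : ∀ j, w j = z j * t := by intro j; rw [hwdef]; simp [mul_comm]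
    have hw1 : ‖w‖ = 1 := by
      rw [hwdef, norm_smul, habs, hrdef]
      field_simp
    have hsum : ∑ i, MvPolynomial.eval (fun j => z j * t) (P i)
        * starRingEnd ℂ (MvPolynomial.eval (fun j => z j * t) (P i)) = 1 := by
      have hin : (inner ℂ (evalPoly P w) (evalPoly P w) : ℂ) = 1 := by
        rw [inner_self_eq_norm_sq_to_K, hsph w hw1]; norm_num
      rw [PiLp.inner_apply] at hin
      rw [← hin]
      apply Finset.sum_congr rfl
      intro i _
      have harg : (fun j => w j) = (fun j => z j * t) := funext hwz
      have : evalPoly P w i = MvPolynomial.eval (fun j => z j * t) (P i) := by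
        show MvPolynomial.eval (fun j => w j) (P i) = _
        rw [harg]
      rw [← this]
      simp [RCLike.inner_apply, mul_comm]
      exact Complex.mul_conj' _
    rw [hQdef]
    simp only [Polynomial.eval_sub, Polynomial.eval_finset_sum, Polynomial.eval_mul,
      Polynomial.eval_pow, Polynomial.eval_X]
    have : ∀ i, (A i).eval t * (R i).eval t
        = t^D * (MvPolynomial.eval (fun j => z j * t) (P i)
          * starRingEnd ℂ (MvPolynomial.eval (fun j => z j * t) (P i))) := by
      intro i
      rw [hA, hR i t ht0, hct, hB]
      ring
    rw [Finset.sum_congr rfl fun i _ => this i, ← Finset.mul_sum, hsum]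
    ring
  have hQzero : Q = 0 := by
    apply Polynomial.eq_zero_of_infinite_isRoot
    apply Set.Infinite.mono _ (infinite_sphere_complex r⁻¹ (inv_pos.2 hr))
    intro t ht
    exact hQ0 t ht
  -- evaluate at 1
  have h1 : Q.eval 1 = 0 := by rw [hQzero]; simp
  rw [hQdef] at h1
  simp only [Polynomial.eval_sub, Polynomial.eval_finset_sum, Polynomial.eval_mul,
    Polynomial.eval_pow, Polynomial.eval_X, one_pow, sub_eq_zero] at h1
  have hcconj : starRingEnd ℂ c = c := by
    rw [hcdef]; simp [map_inv₀, map_pow, Complex.conj_ofReal]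
  have hterm : ∀ i, (A i).eval 1 * (R i).eval 1
      = MvPolynomial.eval (fun j => z j) (P i)
        * starRingEnd ℂ (MvPolynomial.eval (fun j => z j * c) (P i)) := by
    intro i
    rw [hA, hR i 1 one_ne_zero]
    have : c * (1:ℂ)⁻¹ = starRingEnd ℂ c := by rw [hcconj]; simp
    rw [this, hB]
    simp
  rw [Finset.sum_congr rfl fun i _ => hterm i] at h1
  -- identify with the inner product
  rw [PiLp.inner_apply]
  rw [← h1]
  apply Finset.sum_congr rfl
  intro i _
  have harg2 : (fun j => (((‖z‖^2)⁻¹ : ℝ) • z) j) = (fun j => z j * c) := by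
    funext j
    have h3 : (((‖z‖^2)⁻¹ : ℝ) • z) j = ((r^2)⁻¹ : ℝ) • (z j) := rfl
    rw [h3, Complex.real_smul, ← hcr, mul_comm]
  have hb : evalPoly P (((‖z‖^2)⁻¹ : ℝ) • z) i = MvPolynomial.eval (fun j => z j * c) (P i) := by
    show MvPolynomial.eval (fun j => (((‖z‖^2)⁻¹ : ℝ) • z) j) (P i) = _
    rw [harg2]
  have hz' : evalPoly P z i = MvPolynomial.eval (fun j => z j) (P i) := rfl
  rw [hb, hz']
  simp only [RCLike.inner_apply]

/-- a polynomial proper map of unit balls with `p(0) = 0`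
has norm tending to infinity at infinity. -/
theorem norm_tendsto_atTop_of_proper_of_zero {n N : ℕ}
    (P : Fin N → MvPolynomial (Fin n) ℂ)
    (hproper : ProperOn (evalPoly P) (ball (0 : EuclideanSpace ℂ (Fin n)) 1)
      (ball (0 : EuclideanSpace ℂ (Fin N)) 1))
    (hzero : evalPoly P (0 : EuclideanSpace ℂ (Fin n)) = 0) :
    Filter.Tendsto (fun z : EuclideanSpace ℂ (Fin n) => ‖evalPoly P z‖)
      (Bornology.cobounded _) Filter.atTop := by
  have hsph := norm_evalPoly_sphere P hproper
  have hcont := continuous_evalPoly P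
  rw [Filter.tendsto_atTop]
  intro b
  set M : ℝ := max b 1 with hMdef
  have hM : 0 < M := lt_of_lt_of_le one_pos (le_max_right b 1)
  obtain ⟨δ, hδpos, hδ⟩ := Metric.continuousAt_iff.1 hcont.continuousAt M⁻¹ (inv_pos.2 hM)
  have hev : ∀ᶠ z : EuclideanSpace ℂ (Fin n) in Bornology.cobounded _,
      max δ⁻¹ 1 + 1 ≤ ‖z‖ := tendsto_norm_cobounded_atTop.eventually_ge_atTop _
  filter_upwards [hev] with z hz
  have hz1 : (1:ℝ) ≤ ‖z‖ := le_trans (by linarith [le_max_right δ⁻¹ (1:ℝ)]) hz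
  have hz0 : z ≠ 0 := by
    intro h; rw [h, norm_zero] at hz1; linarith
  have hid := key_identity P hsph z hz0
  set bpt : EuclideanSpace ℂ (Fin n) := ((‖z‖^2)⁻¹ : ℝ) • z with hbdef
  have hbn : ‖bpt‖ = ‖z‖⁻¹ := by
    rw [hbdef, norm_smul, Real.norm_eq_abs, abs_of_pos (inv_pos.2 (by positivity))]
    rw [pow_two, mul_inv]
    field_simp
  have hbδ : ‖bpt‖ < δ := by
    rw [hbn]
    have hδinv : δ⁻¹ < ‖z‖ := by
      have : δ⁻¹ ≤ max δ⁻¹ 1 := le_max_left _ _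
      linarith
    rw [← inv_inv δ]
    exact inv_strictAnti₀ (inv_pos.2 hδpos) hδinv
  have hsmall : ‖evalPoly P bpt‖ < M⁻¹ := by
    have := hδ (by rwa [dist_zero_right])
    rwa [hzero, dist_zero_right] at this
  have hcs : (1:ℝ) ≤ ‖evalPoly P bpt‖ * ‖evalPoly P z‖ := by
    have h := norm_inner_le_norm (𝕜 := ℂ) (evalPoly P bpt) (evalPoly P z)
    rw [hid] at h
    simpa using h
  have : M ≤ ‖evalPoly P z‖ := by
    by_contra hcon
    push_neg at hcon
    have h1 : ‖evalPoly P bpt‖ * ‖evalPoly P z‖ < M⁻¹ * M :=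
      mul_lt_mul'' hsmall hcon (norm_nonneg _) (norm_nonneg _)
    rw [inv_mul_cancel₀ (ne_of_gt hM)] at h1
    linarith
  exact le_trans (le_max_left b 1) this
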